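/- For a subset A of the eight square edges (top square edges {T'_1,T'_2},{T'_2,T'_3},{T'_3,T'_4},{T'_4,T'_1} and bottom square edges {T_5,T_6},{T_6,T_7},{T_7,T_8},{T_8,T_5}), let Γ_A be the simple graph on the 18 vertices {T'_1,…,T'_4,T_5,…,T_8,S_1,…,S_6,S_2',…,S_5'} whose edges are: the S-edges, the eight fixed ridge edges, all 24 candidate pairs {T,S}, and the square edges in A. Then among the graphs Γ_A for which every vertex of Γ_A has even degree, there are exactly 3 graph-isomorphism classes; one class (that of the full set of square edges) corresponds to the monohedral tiling FB𝒪, and the remaining 2 classes correspond to the dihedral f-tilings whose prototiles are the Möbius triangle and an isosceles triangle derived from FB𝒪 by a-edge assignments. -/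

import Mathlib

open Matrix

attribute [local instance] Classical.propDecidable

/-- `τ = (2√2+1)/7`. -/
noncomputable def tau : ℝ := (2 * Real.sqrt 2 + 1) / 7

/-- The 18 vertices: `pt 0,…,pt 3` are `T'_1,…,T'_4`; `pt 4,…,pt 7` are `T_5,…,T_8`;
`pt 8,…,pt 13` are `S_1,…,S_6`; `pt 14,…,pt 17` are `S_2',…,S_5'`. -/
noncomputable def pt : Fin 18 → Fin 3 → ℝ :=
  ![tau • ![Real.sqrt 2, 0, 1], tau • ![0, Real.sqrt 2, 1],
    tau • ![-Real.sqrt 2, 0, 1], tau • ![0, -Real.sqrt 2, 1],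
    tau • ![1, 1, -1], tau • ![-1, 1, -1], tau • ![-1, -1, -1], tau • ![1, -1, -1],
    ![0, 0, 1], ![1, 0, 0], ![0, 1, 0], ![-1, 0, 0], ![0, -1, 0], ![0, 0, -1],
    (1 / Real.sqrt 2) • ![1, -1, 0], (1 / Real.sqrt 2) • ![1, 1, 0],
    (1 / Real.sqrt 2) • ![-1, 1, 0], (1 / Real.sqrt 2) • ![-1, -1, 0]]

/-- The eight square edges: the top square edges and the bottom square edges. -/
def squareEdges : Finset (Sym2 (Fin 18)) :=
  {s(0, 1), s(1, 2), s(2, 3), s(3, 0), s(4, 5), s(5, 6), s(6, 7), s(7, 4)}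

/-- The `S`-edges. -/
def sEdges : Finset (Sym2 (Fin 18)) :=
  { s(8, 14), s(8, 15), s(8, 16), s(8, 17),
    s(13, 9), s(13, 10), s(13, 11), s(13, 12),
    s(9, 14), s(9, 15), s(10, 15), s(10, 16),
    s(11, 16), s(11, 17), s(12, 17), s(12, 14) }

/-- The eight fixed ridge edges. -/
def ridgeEdges : Finset (Sym2 (Fin 18)) :=
  {s(0, 9), s(1, 10), s(2, 11), s(3, 12), s(4, 15), s(5, 16), s(6, 17), s(7, 14)}

/-- The 24 candidate pairs `{T, S}` as unordered pairs. -/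
def candEdges : Finset (Sym2 (Fin 18)) :=
  { s(0, 8), s(0, 14), s(0, 15), s(1, 8), s(1, 15), s(1, 16),
    s(2, 8), s(2, 16), s(2, 17), s(3, 8), s(3, 17), s(3, 14),
    s(4, 9), s(4, 10), s(4, 13), s(5, 10), s(5, 11), s(5, 13),
    s(6, 11), s(6, 12), s(6, 13), s(7, 12), s(7, 9), s(7, 13) }

/-- The simple graph `Γ_A` on the 18 vertices whose edges are the `S`-edges, the
eight fixed ridge edges, all 24 candidate pairs, and the square edges in `A`. -/
noncomputable def Γ (A : Finset (Sym2 (Fin 18))) : SimpleGraph (Fin 18) :=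
  SimpleGraph.fromEdgeSet ↑(sEdges ∪ ridgeEdges ∪ candEdges ∪ A)

/-- `A` is a subset of the eight square edges for which every vertex of `Γ_A` has
even degree. -/
noncomputable def Good (A : Finset (Sym2 (Fin 18))) : Prop :=
  A ⊆ squareEdges ∧ ∀ v : Fin 18, Even ((Γ A).degree v)

/-- Graph isomorphism between `Γ_A` and `Γ_{A'}`. -/
noncomputable def isoRel (A A' : {A : Finset (Sym2 (Fin 18)) // Good A}) : Prop :=
  Nonempty (Γ A.1 ≃g Γ A'.1)

/-!
Without square edges every vertex has even degree (each `T`-vertex has degree 4), and a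
square vertex gains one degree for each of its two square edges lying in `A`. So all degrees
are even exactly when, around each square, consecutive edges are both in `A` or both out of
it, i.e. `A` is a union of whole squares: `∅`, the top square, the bottom square or both.
These give `48`, `52`, `52` and `56` edges, and the two one-square graphs are isomorphic by
the rotoreflection of the configuration that exchanges the squares, leaving three classes.
-/

open Finset

namespace Finset

variable {α : Type*} [DecidableEq α]

theorem mem_iff_mem_of_even_card_inter_pair {A : Finset α} {x y : α}
    (h : Even #(A ∩ {x, y})) : x ∈ A ↔ y ∈ A := by
  by_cases hx : x ∈ A <;> by_cases hy : y ∈ A <;>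
    simp_all [inter_insert_of_mem, inter_insert_of_notMem, inter_singleton_of_mem,
      inter_singleton_of_notMem]

theorem inter_eq_empty_or_eq_of_forall_mem_iff {A s : Finset α} {p : Prop}
    (h : ∀ x ∈ s, x ∈ A ↔ p) : A ∩ s = ∅ ∨ A ∩ s = s := by
  by_cases hp : p
  · exact Or.inr (inter_eq_right.2 fun x hx => (h x hx).2 hp)
  · exact Or.inl (eq_empty_of_forall_notMem fun x hx =>
      hp ((h x (mem_inter.1 hx).2).1 (mem_inter.1 hx).1))

end Finset

namespace SimpleGraph

variable {V W : Type*}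

theorem edgeFinset_fromEdgeSet [DecidableEq V] (E : Finset (Sym2 V))
    [Fintype (fromEdgeSet (E : Set (Sym2 V))).edgeSet] :
    (fromEdgeSet (E : Set (Sym2 V))).edgeFinset = {e ∈ E | ¬e.IsDiag} := by
  ext e
  simp

theorem degree_fromEdgeSet [DecidableEq V] (E : Finset (Sym2 V)) (v : V)
    [Fintype ((fromEdgeSet (E : Set (Sym2 V))).neighborSet v)] :
    (fromEdgeSet (E : Set (Sym2 V))).degree v = #{e ∈ E | v ∈ e ∧ ¬e.IsDiag} := by
  classical
  rw [← card_incidenceFinset_eq_degree, incidenceFinset_eq_filter, edgeFinset_fromEdgeSet,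
    filter_filter]
  simp only [and_comm]

def Iso.fromEdgeSet (σ : V ≃ W) {s : Set (Sym2 V)} {t : Set (Sym2 W)}
    (h : Sym2.map σ '' s = t) : fromEdgeSet s ≃g fromEdgeSet t where
  toEquiv := σ
  map_rel_iff' {a b} := by
    subst h
    simp only [fromEdgeSet_adj, ← Sym2.map_mk,
      (Sym2.map.injective σ.injective).mem_set_image, σ.injective.ne_iff]

end SimpleGraph

set_option maxRecDepth 4000

def baseEdges : Finset (Sym2 (Fin 18)) := sEdges ∪ ridgeEdges ∪ candEdges

def topEdges : Finset (Sym2 (Fin 18)) := {s(0, 1), s(1, 2), s(2, 3), s(3, 0)}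

def bottomEdges : Finset (Sym2 (Fin 18)) := {s(4, 5), s(5, 6), s(6, 7), s(7, 4)}

theorem topEdges_union_bottomEdges : topEdges ∪ bottomEdges = squareEdges := by decide

theorem disjoint_baseEdges_squareEdges : Disjoint baseEdges squareEdges := by decide

theorem not_isDiag_of_mem_baseEdges_union_squareEdges :
    ∀ e ∈ baseEdges ∪ squareEdges, ¬e.IsDiag := by decide

theorem even_card_baseEdges_incident : ∀ v : Fin 18, Even #{e ∈ baseEdges | v ∈ e} := by
  decide

theorem Γ_eq_fromEdgeSet (A : Finset (Sym2 (Fin 18))) :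
    Γ A = SimpleGraph.fromEdgeSet ↑(baseEdges ∪ A) := rfl

section

variable {A : Finset (Sym2 (Fin 18))}

theorem degree_Γ (hA : A ⊆ squareEdges) (v : Fin 18) :
    (Γ A).degree v = #{e ∈ baseEdges | v ∈ e} + #{e ∈ A | v ∈ e} := by
  have hdiag := not_isDiag_of_mem_baseEdges_union_squareEdges
  rw [Γ_eq_fromEdgeSet, SimpleGraph.degree_fromEdgeSet, filter_union,
    card_union_of_disjoint (disjoint_filter_filter (disjoint_baseEdges_squareEdges.mono_right hA))]
  congr 2 <;> refine filter_congr fun e he => and_iff_left (hdiag e ?_)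
  · exact mem_union_left _ he
  · exact mem_union_right _ (hA he)

theorem card_edgeFinset_Γ (hA : A ⊆ squareEdges) : #(Γ A).edgeFinset = #baseEdges + #A := by
  rw [Γ_eq_fromEdgeSet, SimpleGraph.edgeFinset_fromEdgeSet, filter_true_of_mem,
    card_union_of_disjoint (disjoint_baseEdges_squareEdges.mono_right hA)]
  exact fun e he =>
    not_isDiag_of_mem_baseEdges_union_squareEdges e (union_subset_union_right hA he)

theorem good_iff (hA : A ⊆ squareEdges) : Good A ↔ ∀ v, Even #{e ∈ A | v ∈ e} := by
  simp only [Good, hA, true_and, degree_Γ hA, Nat.even_add, even_card_baseEdges_incident, true_iff]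

theorem Good.mem_iff_mem (hA : Good A) {v : Fin 18} {x y : Sym2 (Fin 18)}
    (hv : {e ∈ squareEdges | v ∈ e} = {x, y}) : x ∈ A ↔ y ∈ A := by
  refine mem_iff_mem_of_even_card_inter_pair ?_
  rw [← hv]
  convert (good_iff hA.1).1 hA v using 2
  ext e
  simp only [mem_inter, mem_filter]
  exact ⟨fun h => ⟨h.1, h.2.2⟩, fun h => ⟨h.1, hA.1 h.1, h.2⟩⟩

end

theorem Good.eq_empty_or_topEdges_or_bottomEdges_or_squareEdges {A : Finset (Sym2 (Fin 18))}
    (hA : Good A) : A = ∅ ∨ A = topEdges ∨ A = bottomEdges ∨ A = squareEdges := by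
  have h0 := hA.mem_iff_mem (v := 0) (x := s(3, 0)) (y := s(0, 1)) (by decide)
  have h1 := hA.mem_iff_mem (v := 1) (x := s(0, 1)) (y := s(1, 2)) (by decide)
  have h2 := hA.mem_iff_mem (v := 2) (x := s(1, 2)) (y := s(2, 3)) (by decide)
  have h4 := hA.mem_iff_mem (v := 4) (x := s(7, 4)) (y := s(4, 5)) (by decide)
  have h5 := hA.mem_iff_mem (v := 5) (x := s(4, 5)) (y := s(5, 6)) (by decide)
  have h6 := hA.mem_iff_mem (v := 6) (x := s(5, 6)) (y := s(6, 7)) (by decide)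
  have htop : A ∩ topEdges = ∅ ∨ A ∩ topEdges = topEdges := by
    refine inter_eq_empty_or_eq_of_forall_mem_iff (p := s(0, 1) ∈ A) ?_
    intro x hx
    simp only [topEdges, mem_insert, mem_singleton] at hx
    rcases hx with rfl | rfl | rfl | rfl
    exacts [Iff.rfl, h1.symm, (h1.trans h2).symm, h0]
  have hbottom : A ∩ bottomEdges = ∅ ∨ A ∩ bottomEdges = bottomEdges := by
    refine inter_eq_empty_or_eq_of_forall_mem_iff (p := s(4, 5) ∈ A) ?_
    intro x hx
    simp only [bottomEdges, mem_insert, mem_singleton] at hx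
    rcases hx with rfl | rfl | rfl | rfl
    exacts [Iff.rfl, h5.symm, (h5.trans h6).symm, h4]
  have hsplit : A = A ∩ topEdges ∪ A ∩ bottomEdges := by
    rw [← inter_union_distrib_left, topEdges_union_bottomEdges, inter_eq_left.2 hA.1]
  rcases htop with ht | ht <;> rcases hbottom with hb | hb <;> rw [hsplit, ht, hb]
  · exact Or.inl (empty_union _)
  · exact Or.inr (Or.inr (Or.inl (empty_union _)))
  · exact Or.inr (Or.inl (union_empty _))
  · exact Or.inr (Or.inr (Or.inr topEdges_union_bottomEdges))

theorem good_empty : Good ∅ := (good_iff (empty_subset _)).2 (by decide)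

theorem good_topEdges : Good topEdges :=
  (good_iff (topEdges_union_bottomEdges ▸ subset_union_left)).2 (by decide)

theorem good_squareEdges : Good squareEdges := (good_iff Subset.rfl).2 (by decide)

-- The rotoreflection by `π/4` about the `z`-axis; it maps the top square onto the bottom one.
def rotoreflection : Fin 18 ≃ Fin 18 where
  toFun := ![4, 5, 6, 7, 1, 2, 3, 0, 13, 15, 16, 17, 14, 8, 9, 10, 11, 12]
  invFun := ![7, 4, 5, 6, 0, 1, 2, 3, 13, 14, 15, 16, 17, 8, 12, 9, 10, 11]
  left_inv := by decide
  right_inv := by decide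

def topBottomIso : Γ topEdges ≃g Γ bottomEdges :=
  SimpleGraph.Iso.fromEdgeSet rotoreflection (by rw [← coe_image]; exact coe_inj.2 (by decide))

def squareEdgeCount : Quot isoRel → ℕ :=
  Quot.lift (fun A => #A.1) fun A B ⟨e⟩ => by
    simpa [card_edgeFinset_Γ A.2.1, card_edgeFinset_Γ B.2.1] using e.card_edgeFinset_eq

/-- Among the graphs `Γ_A` with all degrees even there are exactly `3`
graph-isomorphism classes; the full set of square edges satisfies the condition (its
class corresponds to the monohedral tiling `FB𝒪`), and the remaining `2` classes
correspond to the dihedral f-tilings with prototiles the Möbius triangle and an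
isosceles triangle derived from `FB𝒪` by `a`-edge assignments. -/
theorem stmt_19 : Nat.card (Quot isoRel) = 3 ∧ Good squareEdges := by
  refine ⟨?_, good_squareEdges⟩
  let cls : Fin 3 → Quot isoRel := ![Quot.mk _ ⟨∅, good_empty⟩,
    Quot.mk _ ⟨topEdges, good_topEdges⟩, Quot.mk _ ⟨squareEdges, good_squareEdges⟩]
  have hinj : Function.Injective cls := by
    intro i j h
    have := congrArg squareEdgeCount h
    fin_cases i <;> fin_cases j <;> first | rfl | exact absurd this (by decide)
  have hsurj : Function.Surjective cls := by
    rintro ⟨A, hA⟩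
    rcases hA.eq_empty_or_topEdges_or_bottomEdges_or_squareEdges with rfl | rfl | rfl | rfl
    · exact ⟨0, rfl⟩
    · exact ⟨1, rfl⟩
    · exact ⟨1, Quot.sound ⟨topBottomIso⟩⟩
    · exact ⟨2, rfl⟩
  rw [← Nat.card_eq_of_bijective cls ⟨hinj, hsurj⟩, Nat.card_fin]
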